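/- The set { ∂v₁/∂x + ∂v₂/∂y + ∂v₃/∂z : (v₁,v₂,v₃) ∈ span_ℝ{Ψ₁,…,Ψ₁₈} } of divergences of elements of the span of the eighteen prism functions Ψ₁,…,Ψ₁₈ equals P₁(ℝ³), the space of real polynomials in x, y, z of total degree at most 1; that is, the auxiliary prism velocity space V̂* satisfies div V̂* = P₁. -/
import Mathlib


open MvPolynomial

/-- The eighteen auxiliary prism functions `Ψ₁, …, Ψ₁₈`, as vector-valued
polynomials in `ℝ[x,y,z]³` (`x = X 0`, `y = X 1`, `z = X 2`). -/
noncomputable def PsiPrism : Fin 18 → (Fin 3 → MvPolynomial (Fin 3) ℝ) :=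
  ![![X 0 * X 2, 0, 0],
    ![0, X 1 * X 2, 0],
    ![-(X 1 * X 2), X 1 * X 2, 0],
    ![(X 0 + X 1 - 1) * X 2, 0, 0],
    ![0, (X 0 + X 1 - 1) * X 2, 0],
    ![X 0 * X 2, -(X 0 * X 2), 0],
    ![X 0 * (1 - X 2), 0, 0],
    ![0, X 1 * (1 - X 2), 0],
    ![-(X 1 * (1 - X 2)), X 1 * (1 - X 2), 0],
    ![(X 0 + X 1 - 1) * (1 - X 2), 0, 0],
    ![0, (X 0 + X 1 - 1) * (1 - X 2), 0],
    ![X 0 * (1 - X 2), -(X 0 * (1 - X 2)), 0],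
    ![0, 0, (1 - X 0 - X 1) * X 2],
    ![0, 0, X 0 * X 2],
    ![0, 0, X 1 * X 2],
    ![0, 0, -((1 - X 0 - X 1) * (1 - X 2))],
    ![0, 0, -(X 0 * (1 - X 2))],
    ![0, 0, -(X 1 * (1 - X 2))]]


noncomputable def Dv : (Fin 3 → MvPolynomial (Fin 3) ℝ) →ₗ[ℝ] MvPolynomial (Fin 3) ℝ :=
  ((pderiv (0 : Fin 3) : Derivation ℝ (MvPolynomial (Fin 3) ℝ) _).toLinearMap
      ∘ₗ (LinearMap.proj (0 : Fin 3) : (Fin 3 → MvPolynomial (Fin 3) ℝ) →ₗ[ℝ] _))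
    + ((pderiv (1 : Fin 3) : Derivation ℝ (MvPolynomial (Fin 3) ℝ) _).toLinearMap
      ∘ₗ (LinearMap.proj (1 : Fin 3) : (Fin 3 → MvPolynomial (Fin 3) ℝ) →ₗ[ℝ] _))
    + ((pderiv (2 : Fin 3) : Derivation ℝ (MvPolynomial (Fin 3) ℝ) _).toLinearMap
      ∘ₗ (LinearMap.proj (2 : Fin 3) : (Fin 3 → MvPolynomial (Fin 3) ℝ) →ₗ[ℝ] _))

theorem Dv_apply (v : Fin 3 → MvPolynomial (Fin 3) ℝ) :
    Dv v = pderiv 0 (v 0) + pderiv 1 (v 1) + pderiv 2 (v 2) := by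
  simp only [Dv, LinearMap.add_apply, LinearMap.comp_apply, LinearMap.proj_apply]
  rfl

theorem Dv_mem : ∀ i, Dv (PsiPrism i) ∈
    Submodule.span ℝ ({1, X 0, X 1, X 2} : Set (MvPolynomial (Fin 3) ℝ)) := by
  have h1 : (1 : MvPolynomial (Fin 3) ℝ) ∈ Submodule.span ℝ ({1, X 0, X 1, X 2} : Set (MvPolynomial (Fin 3) ℝ)) := Submodule.subset_span (by simp)
  have h2 : (X 0 : MvPolynomial (Fin 3) ℝ) ∈ Submodule.span ℝ ({1, X 0, X 1, X 2} : Set (MvPolynomial (Fin 3) ℝ)) := Submodule.subset_span (by simp)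
  have h3 : (X 1 : MvPolynomial (Fin 3) ℝ) ∈ Submodule.span ℝ ({1, X 0, X 1, X 2} : Set (MvPolynomial (Fin 3) ℝ)) := Submodule.subset_span (by simp)
  have h4 : (X 2 : MvPolynomial (Fin 3) ℝ) ∈ Submodule.span ℝ ({1, X 0, X 1, X 2} : Set (MvPolynomial (Fin 3) ℝ)) := Submodule.subset_span (by simp)
  intro i
  fin_cases i
  · show Dv ![X 0 * X 2, 0, 0] ∈ _
    simp [Dv_apply]; exact h4
  · show Dv ![0, X 1 * X 2, 0] ∈ _
    simp [Dv_apply]; exact h4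
  · show Dv ![-(X 1 * X 2), X 1 * X 2, 0] ∈ _
    simp [Dv_apply]; exact h4
  · show Dv ![(X 0 + X 1 - 1) * X 2, 0, 0] ∈ _
    simp [Dv_apply]; exact h4
  · show Dv ![0, (X 0 + X 1 - 1) * X 2, 0] ∈ _
    simp [Dv_apply]; exact h4
  · show Dv ![X 0 * X 2, -(X 0 * X 2), 0] ∈ _
    simp [Dv_apply]; exact h4
  · show Dv ![X 0 * (1 - X 2), 0, 0] ∈ _
    simp [Dv_apply]; exact Submodule.sub_mem _ h1 h4
  · show Dv ![0, X 1 * (1 - X 2), 0] ∈ _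
    simp [Dv_apply]; exact Submodule.sub_mem _ h1 h4
  · show Dv ![-(X 1 * (1 - X 2)), X 1 * (1 - X 2), 0] ∈ _
    simp [Dv_apply]; exact Submodule.sub_mem _ h1 h4
  · show Dv ![(X 0 + X 1 - 1) * (1 - X 2), 0, 0] ∈ _
    simp [Dv_apply]; exact Submodule.sub_mem _ h1 h4
  · show Dv ![0, (X 0 + X 1 - 1) * (1 - X 2), 0] ∈ _
    simp [Dv_apply]; exact Submodule.sub_mem _ h1 h4
  · show Dv ![X 0 * (1 - X 2), -(X 0 * (1 - X 2)), 0] ∈ _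
    simp [Dv_apply]; exact Submodule.sub_mem _ h1 h4
  · show Dv ![0, 0, (1 - X 0 - X 1) * X 2] ∈ _
    simp [Dv_apply]; exact Submodule.sub_mem _ (Submodule.sub_mem _ h1 h2) h3
  · show Dv ![0, 0, X 0 * X 2] ∈ _
    simp [Dv_apply]; exact h2
  · show Dv ![0, 0, X 1 * X 2] ∈ _
    simp [Dv_apply]; exact h3
  · show Dv ![0, 0, -((1 - X 0 - X 1) * (1 - X 2))] ∈ _
    simp [Dv_apply]; exact Submodule.sub_mem _ (Submodule.sub_mem _ h1 h2) h3
  · show Dv ![0, 0, -(X 0 * (1 - X 2))] ∈ _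
    simp [Dv_apply]; exact h2
  · show Dv ![0, 0, -(X 1 * (1 - X 2))] ∈ _
    simp [Dv_apply]; exact h3

theorem Dv_val0 : Dv (PsiPrism 0) = X 2 := by
  show Dv ![X 0 * X 2, 0, 0] = _; simp [Dv_apply]

theorem Dv_val6 : Dv (PsiPrism 6) = 1 - X 2 := by
  show Dv ![X 0 * (1 - X 2), 0, 0] = _; simp [Dv_apply]

theorem Dv_val13 : Dv (PsiPrism 13) = X 0 := by
  show Dv ![0, 0, X 0 * X 2] = _; simp [Dv_apply]

theorem Dv_val14 : Dv (PsiPrism 14) = X 1 := by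
  show Dv ![0, 0, X 1 * X 2] = _; simp [Dv_apply]

theorem mem_span_of_deg_le_one (q : MvPolynomial (Fin 3) ℝ) (h : q.totalDegree ≤ 1) :
    q ∈ Submodule.span ℝ ({1, X 0, X 1, X 2} : Set (MvPolynomial (Fin 3) ℝ)) := by
  have h1 : (1 : MvPolynomial (Fin 3) ℝ) ∈ Submodule.span ℝ ({1, X 0, X 1, X 2} : Set (MvPolynomial (Fin 3) ℝ)) := Submodule.subset_span (by simp)
  have h2 : (X 0 : MvPolynomial (Fin 3) ℝ) ∈ Submodule.span ℝ ({1, X 0, X 1, X 2} : Set (MvPolynomial (Fin 3) ℝ)) := Submodule.subset_span (by simp)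
  have h3 : (X 1 : MvPolynomial (Fin 3) ℝ) ∈ Submodule.span ℝ ({1, X 0, X 1, X 2} : Set (MvPolynomial (Fin 3) ℝ)) := Submodule.subset_span (by simp)
  have h4 : (X 2 : MvPolynomial (Fin 3) ℝ) ∈ Submodule.span ℝ ({1, X 0, X 1, X 2} : Set (MvPolynomial (Fin 3) ℝ)) := Submodule.subset_span (by simp)
  rw [q.as_sum]
  refine Submodule.sum_mem _ fun v hv => ?_
  have hv1 : (v.sum fun _ e => e) ≤ 1 := le_trans (le_totalDegree hv) h
  have hsum : v 0 + v 1 + v 2 ≤ 1 := by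
    rw [Finsupp.sum_fintype] at hv1
    · simpa [Fin.sum_univ_three] using hv1
    · intro; rfl
  have hcase : (v 0 = 0 ∧ v 1 = 0 ∧ v 2 = 0) ∨ (v 0 = 1 ∧ v 1 = 0 ∧ v 2 = 0) ∨
      (v 0 = 0 ∧ v 1 = 1 ∧ v 2 = 0) ∨ (v 0 = 0 ∧ v 1 = 0 ∧ v 2 = 1) := by omega
  rcases hcase with ⟨e0, e1, e2⟩ | ⟨e0, e1, e2⟩ | ⟨e0, e1, e2⟩ | ⟨e0, e1, e2⟩
  · have hv0 : v = 0 := by ext a; fin_cases a <;> assumption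
    rw [hv0, monomial_zero']
    have : C (coeff 0 q) = (coeff 0 q) • (1 : MvPolynomial (Fin 3) ℝ) := by
      rw [smul_eq_C_mul, mul_one]
    rw [this]; exact Submodule.smul_mem _ _ h1
  · have hv0 : v = Finsupp.single 0 1 := by
      ext a; fin_cases a <;> simp [Finsupp.single_apply, e0, e1, e2]
    rw [hv0]
    have : (monomial (Finsupp.single (0 : Fin 3) 1)) (coeff (Finsupp.single 0 1) q) =
        (coeff (Finsupp.single 0 1) q) • (X 0 : MvPolynomial (Fin 3) ℝ) := by
      rw [X, smul_monomial, smul_eq_mul, mul_one]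
    rw [this]; exact Submodule.smul_mem _ _ h2
  · have hv0 : v = Finsupp.single 1 1 := by
      ext a; fin_cases a <;> simp [Finsupp.single_apply, e0, e1, e2]
    rw [hv0]
    have : (monomial (Finsupp.single (1 : Fin 3) 1)) (coeff (Finsupp.single 1 1) q) =
        (coeff (Finsupp.single 1 1) q) • (X 1 : MvPolynomial (Fin 3) ℝ) := by
      rw [X, smul_monomial, smul_eq_mul, mul_one]
    rw [this]; exact Submodule.smul_mem _ _ h3
  · have hv0 : v = Finsupp.single 2 1 := by
      ext a; fin_cases a <;> simp [Finsupp.single_apply, e0, e1, e2]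
    rw [hv0]
    have : (monomial (Finsupp.single (2 : Fin 3) 1)) (coeff (Finsupp.single 2 1) q) =
        (coeff (Finsupp.single 2 1) q) • (X 2 : MvPolynomial (Fin 3) ℝ) := by
      rw [X, smul_monomial, smul_eq_mul, mul_one]
    rw [this]; exact Submodule.smul_mem _ _ h4


/-- The divergences of elements of the auxiliary prism velocity space
`V̂* = span{Ψ₁,…,Ψ₁₈}` are exactly the polynomials of total degree at most `1`:
`div V̂* = P₁`. -/
theorem prism_aux_div_eq_P1 :
    (fun v : Fin 3 → MvPolynomial (Fin 3) ℝ =>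
        pderiv 0 (v 0) + pderiv 1 (v 1) + pderiv 2 (v 2)) ''
      (Submodule.span ℝ (Set.range PsiPrism) : Set (Fin 3 → MvPolynomial (Fin 3) ℝ)) =
      {q : MvPolynomial (Fin 3) ℝ | q.totalDegree ≤ 1} := by
  have hfun : (fun v : Fin 3 → MvPolynomial (Fin 3) ℝ =>
      pderiv 0 (v 0) + pderiv 1 (v 1) + pderiv 2 (v 2)) = ⇑Dv := by
    funext v; rw [Dv_apply]
  rw [hfun, ← Submodule.map_coe, Submodule.map_span]
  ext q
  simp only [SetLike.mem_coe, Set.mem_setOf_eq]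
  constructor
  · intro hq
    have hle : Submodule.span ℝ (⇑Dv '' Set.range PsiPrism) ≤
        restrictTotalDegree (Fin 3) ℝ 1 := by
      rw [Submodule.span_le]
      rintro _ ⟨_, ⟨i, rfl⟩, rfl⟩
      rw [SetLike.mem_coe, mem_restrictTotalDegree]
      have hM : Submodule.span ℝ ({1, X 0, X 1, X 2} : Set (MvPolynomial (Fin 3) ℝ)) ≤
          restrictTotalDegree (Fin 3) ℝ 1 := by
        rw [Submodule.span_le]
        intro p hp
        rw [SetLike.mem_coe, mem_restrictTotalDegree]
        rcases hp with rfl | rfl | rfl | rfl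
        · rw [totalDegree_one]; exact zero_le_one
        · rw [totalDegree_X]
        · rw [totalDegree_X]
        · rw [totalDegree_X]
      exact (mem_restrictTotalDegree _ _ _).1 (hM (Dv_mem i))
    exact (mem_restrictTotalDegree _ _ _).1 (hle hq)
  · intro hq
    have hsub : Submodule.span ℝ ({1, X 0, X 1, X 2} : Set (MvPolynomial (Fin 3) ℝ)) ≤
        Submodule.span ℝ (⇑Dv '' Set.range PsiPrism) := by
      rw [Submodule.span_le]
      have m0 : (X 2 : MvPolynomial (Fin 3) ℝ) ∈ Submodule.span ℝ (⇑Dv '' Set.range PsiPrism) :=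
        Dv_val0 ▸ Submodule.subset_span ⟨PsiPrism 0, ⟨0, rfl⟩, rfl⟩
      have m6 : (1 - X 2 : MvPolynomial (Fin 3) ℝ) ∈ Submodule.span ℝ (⇑Dv '' Set.range PsiPrism) :=
        Dv_val6 ▸ Submodule.subset_span ⟨PsiPrism 6, ⟨6, rfl⟩, rfl⟩
      have m13 : (X 0 : MvPolynomial (Fin 3) ℝ) ∈ Submodule.span ℝ (⇑Dv '' Set.range PsiPrism) :=
        Dv_val13 ▸ Submodule.subset_span ⟨PsiPrism 13, ⟨13, rfl⟩, rfl⟩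
      have m14 : (X 1 : MvPolynomial (Fin 3) ℝ) ∈ Submodule.span ℝ (⇑Dv '' Set.range PsiPrism) :=
        Dv_val14 ▸ Submodule.subset_span ⟨PsiPrism 14, ⟨14, rfl⟩, rfl⟩
      intro p hp
      rcases hp with rfl | rfl | rfl | rfl
      · have := Submodule.add_mem _ m0 m6
        simpa using this
      · exact m13
      · exact m14
      · exact m0
    exact hsub (mem_span_of_deg_le_one q hq)
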